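/- For all integers n ≥ 1, the total number of peaks over all Catalan words of length n equals Σ_{ℓ=1}^{n-1} C(2(n-ℓ)-1, n-ℓ-2), where a summand is taken to be 0 whenever n - ℓ - 2 < 0. -/

import Mathlib

/-- The set of Catalan words of length `n`: words `w` over ℕ with `w 1 = 0` and
`w (i+1) ≤ w i + 1` for all `i`. -/
def CatalanWord (n : ℕ) : Set (List ℕ) :=
  {w | w.length = n ∧ w.getD 0 0 = 0 ∧
    ∀ i, i + 1 < n → w.getD (i + 1) 0 ≤ w.getD i 0 + 1}

/-- Number of `l`-peaks of `w`: occurrences of a factor `a (a+1)^l b` with `a ≥ b`. -/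
def lPeaks (l : ℕ) (w : List ℕ) : ℕ :=
  ((Finset.range w.length).filter (fun i =>
    i + l + 1 < w.length ∧
    (∀ j, j < l → w.getD (i + 1 + j) 0 = w.getD i 0 + 1) ∧
    w.getD (i + l + 1) 0 ≤ w.getD i 0)).card

/-- Total number of peaks of `w` (that is, `l`-peaks for all `l ≥ 1`). -/
def peaks (w : List ℕ) : ℕ :=
  ∑ l ∈ Finset.Icc 1 w.length, lPeaks l w

/-!
Deleting the run `(a+1)^l` of an `l`-peak at position `i` leaves a weak descent
`w_{i+1} ≤ w_i` at position `i` of a Catalan word of length `n - l`, and reinserting the run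
undoes this; so the `l`-peaks over words of length `n` are equinumerous with the weak descents
(the `0`-peaks, `lPeaks 0`) over words of length `n - l`.

Weak descents are counted by refining according to the last letter `k`: appending a letter `k`
to a word ending in `j` is allowed iff `k ≤ j + 1` and creates a descent iff `k ≤ j`. The number
of words of length `m` ending in `k` and their total number of descents then satisfy
Pascal-type recurrences in `(m, k)`, whose solutions are ballot-type binomials; summing over
`k` gives `C(2m - 1, m - 2)`.
-/

open Finset

lemma List.ext_getD_of_length_eq {α : Type*} {l₁ l₂ : List α} {d : α}
    (hl : l₁.length = l₂.length) (h : ∀ j, l₁.getD j d = l₂.getD j d) : l₁ = l₂ :=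
  List.ext_getElem hl fun j h₁ h₂ => by
    simpa only [List.getD_eq_getElem _ _ h₁, List.getD_eq_getElem _ _ h₂] using h j

lemma getLastD_eq_getD (u : List ℕ) : u.getLastD 0 = u.getD (u.length - 1) 0 := by
  rcases u.eq_nil_or_concat with rfl | ⟨v, a, rfl⟩
  · rfl
  · simp

lemma sum_filter_le_eq_add {ι M : Type*} [AddCommMonoid M] (s : Finset ι) (φ : ι → ℕ) (k : ℕ)
    (f : ι → M) :
    ∑ x ∈ s with k ≤ φ x, f x = ∑ x ∈ s with φ x = k, f x + ∑ x ∈ s with k + 1 ≤ φ x, f x := by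
  rw [← sum_filter_add_sum_filter_not (s.filter (k ≤ φ ·)) (φ · = k), filter_filter,
    filter_filter]
  congr 1 <;> exact sum_congr (filter_congr fun x _ => by omega) fun _ _ => rfl

lemma append_singleton_mem_catalanWord_iff {u : List ℕ} {m k : ℕ} (hu : u.length = m + 1) :
    u ++ [k] ∈ CatalanWord (m + 2) ↔ u ∈ CatalanWord (m + 1) ∧ k ≤ u.getLastD 0 + 1 := by
  have hlt : ∀ i ≤ m, (u ++ [k]).getD i 0 = u.getD i 0 := fun i hi =>
    List.getD_append _ _ _ _ (by omega)
  have hlast : (u ++ [k]).getD (m + 1) 0 = k := by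
    rw [List.getD_append_right _ _ _ _ (by omega), hu, Nat.sub_self]; rfl
  simp only [CatalanWord, Set.mem_ofPred_eq, List.length_append, List.length_singleton, hu,
    getLastD_eq_getD, add_tsub_cancel_right, hlt 0 (Nat.zero_le m), true_and]
  constructor
  · rintro ⟨h0, hstep⟩
    refine ⟨⟨h0, fun i hi => ?_⟩, ?_⟩
    · rw [← hlt i (by omega), ← hlt (i + 1) (by omega)]
      exact hstep i (by omega)
    · rw [← hlast, ← hlt m le_rfl]
      exact hstep m (by omega)
  · rintro ⟨⟨h0, hstep⟩, hk⟩
    refine ⟨h0, fun i hi => ?_⟩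
    rcases Nat.lt_or_ge i m with him | him
    · rw [hlt i (by omega), hlt (i + 1) (by omega)]
      exact hstep i (by omega)
    · obtain rfl : i = m := by omega
      rwa [hlast, hlt i le_rfl]

def catalanWords : ℕ → Finset (List ℕ)
  | 0 => {[]}
  | 1 => {[0]}
  | m + 2 => (catalanWords (m + 1)).biUnion fun u =>
      (range (u.getLastD 0 + 2)).image fun k => u ++ [k]

theorem mem_catalanWords {n : ℕ} {w : List ℕ} : w ∈ catalanWords n ↔ w ∈ CatalanWord n := by
  induction n using Nat.twoStepInduction generalizing w with
  | zero =>
    simp only [catalanWords, mem_singleton, CatalanWord, Set.mem_ofPred_eq, List.length_eq_zero_iff]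
    exact ⟨fun h => ⟨h, by simp [h], fun i hi => by omega⟩, And.left⟩
  | one =>
    simp only [catalanWords, mem_singleton, CatalanWord, Set.mem_ofPred_eq]
    constructor
    · rintro rfl
      exact ⟨rfl, rfl, fun i hi => by omega⟩
    · rintro ⟨hlen, h0, -⟩
      obtain ⟨a, rfl⟩ := List.length_eq_one_iff.mp hlen
      simp_all
  | more m _ ih =>
    simp only [catalanWords, mem_biUnion, mem_image, mem_range, ih]
    constructor
    · rintro ⟨u, hu, k, hk, rfl⟩
      exact (append_singleton_mem_catalanWord_iff hu.1).2 ⟨hu, by omega⟩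
    · intro hw
      have hne : w ≠ [] := by rintro rfl; simp [CatalanWord] at hw
      have hlen : w.dropLast.length = m + 1 := by simp [hw.1]
      rw [← List.dropLast_append_getLast hne] at hw ⊢
      have := (append_singleton_mem_catalanWord_iff hlen).1 hw
      exact ⟨_, this.1, _, by omega, rfl⟩

lemma sum_catalanWords_add_two {M : Type*} [AddCommMonoid M] (m : ℕ) (f : List ℕ → M) :
    ∑ w ∈ catalanWords (m + 2), f w =
      ∑ u ∈ catalanWords (m + 1), ∑ k ∈ range (u.getLastD 0 + 2), f (u ++ [k]) := by
  rw [catalanWords, sum_biUnion]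
  · exact sum_congr rfl fun u _ => sum_image fun k _ k' _ h => by simpa using h
  · intro u _ v _ huv
    simp only [Function.onFun, disjoint_left, mem_image]
    rintro _ ⟨k, -, rfl⟩ ⟨k', -, h⟩
    exact huv (List.append_inj_left' h rfl).symm

lemma getLastD_le_of_mem_catalanWords {m : ℕ} {w : List ℕ} (hw : w ∈ catalanWords (m + 1)) :
    w.getLastD 0 ≤ m := by
  induction m generalizing w with
  | zero => simp_all [catalanWords]
  | succ m ih =>
    simp only [catalanWords, mem_biUnion, mem_image, mem_range] at hw
    obtain ⟨u, hu, k, hk, rfl⟩ := hw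
    have := ih hu
    rw [List.getLastD_concat]
    omega

lemma sum_filter_getLastD_catalanWords_add_two {M : Type*} [AddCommMonoid M] (m k : ℕ)
    (f : List ℕ → M) :
    ∑ w ∈ catalanWords (m + 2) with w.getLastD 0 = k, f w =
      ∑ u ∈ catalanWords (m + 1) with k ≤ u.getLastD 0 + 1, f (u ++ [k]) := by
  rw [sum_filter, sum_catalanWords_add_two, sum_filter]
  refine sum_congr rfl fun u _ => ?_
  simp only [List.getLastD_concat, sum_ite_eq', mem_range, Nat.lt_succ_iff]

lemma lPeaks_eq_zero_of_length_le {l : ℕ} {w : List ℕ} (h : w.length ≤ l + 1) : lPeaks l w = 0 :=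
  card_eq_zero.2 <| filter_eq_empty_iff.2 fun _ _ hi => by omega

lemma lPeaks_zero_append_singleton {u : List ℕ} (hu : u ≠ []) (k : ℕ) :
    lPeaks 0 (u ++ [k]) = lPeaks 0 u + if k ≤ u.getLastD 0 then 1 else 0 := by
  obtain ⟨L, hL⟩ : ∃ L, u.length = L + 1 :=
    Nat.exists_eq_succ_of_ne_zero (by simpa using hu)
  have hget : ∀ i ≤ L, (u ++ [k]).getD i 0 = u.getD i 0 := fun i hi =>
    List.getD_append _ _ _ _ (by omega)
  have hk : (u ++ [k]).getD (L + 1) 0 = k := by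
    rw [List.getD_append_right _ _ _ _ (by omega), hL, Nat.sub_self]; rfl
  simp only [lPeaks, List.length_append, List.length_singleton, hL, card_filter, sum_range_succ,
    getLastD_eq_getD, add_tsub_cancel_right, add_zero, not_lt_zero, false_imp_iff, imp_true_iff,
    true_and, lt_self_iff_false, false_and, if_false, lt_add_iff_pos_right, zero_lt_one, hk,
    hget L le_rfl]
  congr 1
  refine sum_congr rfl fun i hi => ?_
  rw [mem_range] at hi
  rw [hget i (by omega), hget (i + 1) (by omega)]
  simp only [show i + 1 < L + 1 + 1 ↔ i + 1 < L + 1 by omega]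

section RunContraction

def contractRun (w : List ℕ) (i l : ℕ) : List ℕ := w.take (i + 1) ++ w.drop (i + l + 1)

def insertRun (u : List ℕ) (i l : ℕ) : List ℕ :=
  u.take (i + 1) ++ List.replicate l (u.getD i 0 + 1) ++ u.drop (i + 1)

variable {u w : List ℕ} {i l : ℕ}

lemma length_contractRun (h : i + l < w.length) :
    (contractRun w i l).length = w.length - l := by
  simp only [contractRun, List.length_append, List.length_take, List.length_drop]
  omega

lemma getD_contractRun (h : i < w.length) (j : ℕ) :
    (contractRun w i l).getD j 0 = w.getD (if j ≤ i then j else j + l) 0 := by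
  simp only [contractRun, List.getD_eq_getElem?_getD, List.getElem?_append, List.length_take,
    List.getElem?_take, List.getElem?_drop]
  split_ifs <;> first | rfl | omega | (congr 2; omega)

lemma length_insertRun (h : i < u.length) : (insertRun u i l).length = u.length + l := by
  simp only [insertRun, List.length_append, List.length_take, List.length_replicate,
    List.length_drop]
  omega

lemma getD_insertRun (h : i < u.length) (j : ℕ) :
    (insertRun u i l).getD j 0 =
      if j ≤ i then u.getD j 0 else if j ≤ i + l then u.getD i 0 + 1 else u.getD (j - l) 0 := by
  simp only [insertRun, List.getD_eq_getElem?_getD, List.getElem?_append, List.length_append,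
    List.length_take, List.length_replicate, List.getElem?_take, List.getElem?_drop,
    List.getElem?_replicate]
  split_ifs <;> first | rfl | omega | (congr 2; omega)

lemma contractRun_insertRun (h : i < u.length) : contractRun (insertRun u i l) i l = u := by
  have hi : i < (insertRun u i l).length := by rw [length_insertRun h]; omega
  refine List.ext_getD_of_length_eq (d := 0) ?_ fun j => ?_
  · rw [length_contractRun (by rw [length_insertRun h]; omega), length_insertRun h,
      Nat.add_sub_cancel]
  · rw [getD_contractRun hi, getD_insertRun h]
    split_ifs <;> first | rfl | omega | (congr 1; omega)

lemma insertRun_contractRun (h : i + l < w.length)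
    (hrun : ∀ j < l, w.getD (i + 1 + j) 0 = w.getD i 0 + 1) :
    insertRun (contractRun w i l) i l = w := by
  have hi : i < (contractRun w i l).length := by rw [length_contractRun h]; omega
  refine List.ext_getD_of_length_eq (d := 0) ?_ fun j => ?_
  · rw [length_insertRun hi, length_contractRun h]
    omega
  · have hw : i < w.length := by omega
    simp only [getD_insertRun hi, getD_contractRun hw]
    split_ifs with h₁ h₂ <;> try first | rfl | omega | (congr 1; omega)
    obtain ⟨r, rfl⟩ : ∃ r, j = i + 1 + r := ⟨j - (i + 1), by omega⟩
    exact (hrun r (by omega)).symm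

lemma contractRun_mem_catalanWord {m : ℕ} (hw : w ∈ CatalanWord (m + l)) (hi : i + 1 < m)
    (hend : w.getD (i + l + 1) 0 ≤ w.getD i 0 + 1) : contractRun w i l ∈ CatalanWord m := by
  obtain ⟨hlen, h0, hstep⟩ := hw
  have hwi : i < w.length := by omega
  refine ⟨by rw [length_contractRun (by omega), hlen]; omega, ?_, fun j hj => ?_⟩
  · rwa [getD_contractRun hwi, if_pos (Nat.zero_le i)]
  rw [getD_contractRun hwi, getD_contractRun hwi]
  rcases lt_trichotomy j i with hji | rfl | hji
  · rw [if_pos (Nat.succ_le_of_lt hji), if_pos hji.le]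
    exact hstep j (by omega)
  · rw [if_neg (by omega), if_pos le_rfl, add_right_comm]
    exact hend
  · rw [if_neg (by omega), if_neg (by omega), add_right_comm]
    exact hstep (j + l) (by omega)

lemma insertRun_mem_catalanWord {m : ℕ} (hu : u ∈ CatalanWord m) (hi : i < m) :
    insertRun u i l ∈ CatalanWord (m + l) := by
  obtain ⟨hlen, h0, hstep⟩ := hu
  have hui : i < u.length := by omega
  refine ⟨by rw [length_insertRun hui, hlen], ?_, fun j hj => ?_⟩
  · rwa [getD_insertRun hui, if_pos (Nat.zero_le i)]
  rw [getD_insertRun hui, getD_insertRun hui]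
  rcases lt_trichotomy j i with hji | rfl | hji
  · rw [if_pos (Nat.succ_le_of_lt hji), if_pos hji.le]
    exact hstep j (by omega)
  · rw [if_pos le_rfl]
    split_ifs
    · omega
    · exact le_rfl
    · rw [show j + 1 - l = j + 1 by omega]
      exact hstep j (by omega)
  · rw [if_neg (by omega : ¬j + 1 ≤ i), if_neg hji.not_ge]
    rcases lt_trichotomy j (i + l) with h | rfl | h
    · rw [if_pos (Nat.succ_le_of_lt h), if_pos h.le]
      omega
    · rw [if_neg (by omega), if_pos le_rfl, show i + l + 1 - l = i + 1 by omega]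
      exact (hstep i (by omega)).trans (Nat.le_succ _)
    · rw [if_neg (by omega), if_neg (by omega), show j + 1 - l = j - l + 1 by omega]
      exact hstep (j - l) (by omega)

theorem sum_lPeaks_catalanWords_add (m l : ℕ) :
    ∑ w ∈ catalanWords (m + l), lPeaks l w = ∑ u ∈ catalanWords m, lPeaks 0 u := by
  simp only [lPeaks, ← card_sigma]
  refine card_bij' (fun p _ => ⟨contractRun p.1 p.2 l, p.2⟩)
    (fun p _ => ⟨insertRun p.1 p.2 l, p.2⟩) ?_ ?_ ?_ ?_
  · rintro ⟨w, i⟩ hp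
    simp only [mem_sigma, mem_filter, mem_range, mem_catalanWords] at hp ⊢
    obtain ⟨hw, -, hlt, -, hpeak⟩ := hp
    have hwi : i < w.length := by omega
    have hlen : w.length = m + l := hw.1
    have hu := contractRun_mem_catalanWord hw (by omega) (hpeak.trans (Nat.le_succ _))
    simp only [hu.1, getD_contractRun hwi, add_zero, if_pos le_rfl, if_neg (by omega : ¬i + 1 ≤ i)]
    exact ⟨hu, by omega, by omega, fun j hj => absurd hj (Nat.not_lt_zero j),
      by rwa [add_right_comm]⟩
  · rintro ⟨u, i⟩ hp
    simp only [mem_sigma, mem_filter, mem_range, mem_catalanWords, add_zero] at hp ⊢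
    obtain ⟨hu, hi, hlt, -, hdesc⟩ := hp
    have hlen : u.length = m := hu.1
    have hw := insertRun_mem_catalanWord (i := i) (l := l) hu (by omega)
    simp only [hw.1, getD_insertRun hi, if_pos le_rfl, if_neg (by omega : ¬i + l + 1 ≤ i + l),
      if_neg (by omega : ¬i + l + 1 ≤ i)]
    refine ⟨hw, by omega, by omega, fun j hj => ?_, by rwa [show i + l + 1 - l = i + 1 by omega]⟩
    rw [if_neg (by omega), if_pos (by omega)]
  · rintro ⟨w, i⟩ hp
    simp only [mem_sigma, mem_filter, mem_range] at hp
    rw [insertRun_contractRun (by omega) hp.2.2.2.1]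
  · rintro ⟨u, i⟩ hp
    simp only [mem_sigma, mem_filter, mem_range] at hp
    rw [contractRun_insertRun hp.2.1]

end RunContraction

def endCount (m k : ℕ) : ℕ := #{w ∈ catalanWords m | w.getLastD 0 = k}

def endDescents (m k : ℕ) : ℕ := ∑ w ∈ catalanWords m with w.getLastD 0 = k, lPeaks 0 w

lemma endCount_add_two (m k : ℕ) :
    endCount (m + 2) k = #{u ∈ catalanWords (m + 1) | k ≤ u.getLastD 0 + 1} := by
  simp only [endCount, card_eq_sum_ones, sum_filter_getLastD_catalanWords_add_two]

lemma endCount_add_two_zero (m : ℕ) : endCount (m + 2) 0 = endCount (m + 2) 1 := by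
  simp only [endCount_add_two, zero_le, le_add_iff_nonneg_left]

lemma endCount_add_two_succ (m k : ℕ) :
    endCount (m + 2) (k + 1) = endCount (m + 1) k + endCount (m + 2) (k + 2) := by
  rw [endCount_add_two, endCount_add_two, endCount]
  simp only [Nat.add_le_add_iff_right, Nat.reduceLeDiff, card_eq_sum_ones]
  exact sum_filter_le_eq_add _ (fun u : List ℕ => u.getLastD 0) k fun _ => 1

lemma endDescents_add_two (m k : ℕ) :
    endDescents (m + 2) k =
      ∑ u ∈ catalanWords (m + 1) with k ≤ u.getLastD 0 + 1, lPeaks 0 u +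
        endCount (m + 2) (k + 1) := by
  have hne : ∀ u ∈ catalanWords (m + 1), u ≠ [] := fun u hu => by
    rintro rfl; simpa [CatalanWord] using mem_catalanWords.1 hu
  rw [endDescents, sum_filter_getLastD_catalanWords_add_two, endCount_add_two, card_eq_sum_ones,
    sum_congr rfl fun u hu => lPeaks_zero_append_singleton (hne u (mem_filter.1 hu).1) _,
    sum_add_distrib, ← sum_filter, filter_filter]
  exact congrArg₂ _ rfl (sum_congr (filter_congr fun u _ => by omega) fun _ _ => rfl)

lemma endDescents_add_two_zero (m : ℕ) :
    endDescents (m + 2) 0 + endCount (m + 2) 2 = endDescents (m + 2) 1 + endCount (m + 2) 1 := by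
  simp only [endDescents_add_two, zero_le, le_add_iff_nonneg_left]
  ring

lemma endDescents_add_two_succ (m k : ℕ) :
    endDescents (m + 2) (k + 1) + endCount (m + 2) (k + 3) =
      endDescents (m + 1) k + endDescents (m + 2) (k + 2) + endCount (m + 2) (k + 2) := by
  rw [endDescents_add_two, endDescents_add_two, endDescents]
  simp only [Nat.add_le_add_iff_right, Nat.reduceLeDiff,
    sum_filter_le_eq_add _ (fun u : List ℕ => u.getLastD 0) k]
  ring

lemma endCount_eq_zero {m k : ℕ} (h : m < k) : endCount (m + 1) k = 0 :=
  card_eq_zero.2 <| filter_eq_empty_iff.2 fun _ hw hk =>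
    (getLastD_le_of_mem_catalanWords hw).not_gt (hk ▸ h)

lemma endDescents_eq_zero {m k : ℕ} (h : m < k) : endDescents (m + 1) k = 0 :=
  sum_eq_zero fun _ hw => absurd h
    (not_lt.2 ((mem_filter.1 hw).2 ▸ getLastD_le_of_mem_catalanWords (mem_filter.1 hw).1))

lemma endCount_self (k : ℕ) : endCount (k + 1) k = 1 := by
  induction k with
  | zero => rfl
  | succ k ih => rw [endCount_add_two_succ, ih, endCount_eq_zero (Nat.lt_succ_self _)]

lemma endDescents_self (k : ℕ) : endDescents (k + 1) k = 0 := by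
  induction k with
  | zero => rfl
  | succ k ih =>
    have h := endDescents_add_two_succ k k
    rwa [ih, endCount_eq_zero (m := k + 1) (by omega), endCount_eq_zero (m := k + 1) (by omega),
      endDescents_eq_zero (m := k + 1) (k := k + 2) (by omega), add_zero, add_zero, add_zero] at h

lemma endDescents_succ_self (k : ℕ) : endDescents (k + 2) k = k + 1 := by
  induction k with
  | zero =>
    have h := endDescents_add_two_zero 0
    rwa [endCount_eq_zero (m := 1) (by omega), endDescents_self, endCount_self, add_zero] at h
  | succ k ih =>
    have h := endDescents_add_two_succ (k + 1) k
    rw [ih, endCount_eq_zero (m := k + 2) (by omega), endDescents_self, endCount_self] at h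
    omega

/-- `endCount (k + a + 1) k` is the ballot number `C(k + 2a, a) - C(k + 2a, a - 1)`, written
without truncated subtraction. -/
theorem endCount_add_choose (a k : ℕ) :
    endCount (k + a + 1) k + (k + 2 * a).choose (k + a + 1) = (k + 2 * a).choose a := by
  induction a generalizing k with
  | zero => simp [endCount_self]
  | succ a ih =>
    induction k with
    | zero =>
      have ih₁ := ih 1
      have hrec := endCount_add_two_zero a
      have pascal₁ := Nat.choose_succ_succ' (2 * a + 1) a
      have pascal₂ := Nat.choose_succ_succ' (2 * a + 1) (a + 1)
      ring_nf at ih₁ hrec pascal₁ pascal₂ ⊢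
      omega
    | succ k ihk =>
      have ih₁ := ih (k + 2)
      have hrec := endCount_add_two_succ (k + a + 1) k
      have pascal₁ := Nat.choose_succ_succ' (k + 2 * a + 2) a
      have pascal₂ := Nat.choose_succ_succ' (k + 2 * a + 2) (k + a + 2)
      ring_nf at ihk ih₁ hrec pascal₁ pascal₂ ⊢
      omega

theorem endDescents_eq (a k : ℕ) :
    endDescents (k + a + 2) k = (k + 1) * (k + 2 * a + 1).choose a := by
  induction a generalizing k with
  | zero => simp [endDescents_succ_self]
  | succ a ih =>
    induction k with
    | zero =>
      have ih₁ := ih 1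
      have hrec := endDescents_add_two_zero (a + 1)
      have count₁ := endCount_add_choose (a + 1) 1
      have count₂ := endCount_add_choose a 2
      have pascal := Nat.choose_succ_succ' (2 * a + 2) (a + 2)
      have symm := Nat.choose_symm_of_eq_add (show 2 * a + 2 = (a + 2) + a by ring)
      ring_nf at ih₁ hrec count₁ count₂ pascal symm ⊢
      omega
    | succ k ihk =>
      have ih₁ := ih (k + 2)
      have hrec := endDescents_add_two_succ (k + a + 2) k
      have count₁ := endCount_add_choose (a + 1) (k + 2)
      have count₂ := endCount_add_choose a (k + 3)
      have pascal₁ := Nat.choose_succ_succ' (k + 2 * a + 3) a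
      have pascal₂ := Nat.choose_succ_succ' (k + 2 * a + 3) (k + a + 3)
      have symm := Nat.choose_symm_of_eq_add (show k + 2 * a + 3 = (k + a + 3) + a by ring)
      zify at ihk ih₁ hrec count₁ count₂ pascal₁ pascal₂ symm ⊢
      ring_nf at ihk ih₁ hrec count₁ count₂ pascal₁ pascal₂ symm ⊢
      linear_combination hrec + ihk + ih₁ + count₁ - count₂ - pascal₂ - symm -
        ((k : ℤ) + 1) * pascal₁

theorem sum_lPeaks_zero_catalanWords (b : ℕ) :
    ∑ w ∈ catalanWords (b + 2), lPeaks 0 w = (2 * b + 3).choose b := by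
  -- appending `1` to a word creates a new descent iff the word does not end in `0`
  have happend := endDescents_add_two (b + 1) 1
  rw [filter_true_of_mem fun u _ => Nat.le_add_left 1 _] at happend
  have descents := endDescents_eq b 1
  have count := endCount_add_choose b 2
  have pascal := Nat.choose_succ_succ' (2 * b + 2) (b + 2)
  have symm₁ := Nat.choose_symm_of_eq_add (show 2 * b + 3 = (b + 3) + b by ring)
  have symm₂ := Nat.choose_symm_of_eq_add (show 2 * b + 2 = (b + 2) + b by ring)
  ring_nf at happend descents count pascal symm₁ symm₂ ⊢
  omega

theorem sum_lPeaks_catalanWords (n l : ℕ) :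
    ∑ w ∈ catalanWords n, lPeaks l w =
      if l + 2 ≤ n then (2 * (n - l) - 1).choose (n - l - 2) else 0 := by
  split_ifs with h
  · obtain ⟨b, rfl⟩ : ∃ b, n = b + 2 + l := ⟨n - l - 2, by omega⟩
    rw [sum_lPeaks_catalanWords_add, sum_lPeaks_zero_catalanWords]
    congr 1 <;> omega
  · exact sum_eq_zero fun w hw =>
      lPeaks_eq_zero_of_length_le ((mem_catalanWords.1 hw).1 ▸ by omega)

theorem total_peaks_general (n : ℕ) :
    ∑ᶠ w ∈ CatalanWord n, peaks w =
      ∑ l ∈ Finset.Icc 1 (n - 1),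
        if l + 2 ≤ n then Nat.choose (2 * (n - l) - 1) (n - l - 2) else 0 := by
  have hwords : CatalanWord n = catalanWords n := Set.ext fun _ => mem_catalanWords.symm
  rw [hwords, finsum_mem_coe_finset]
  calc ∑ w ∈ catalanWords n, peaks w = ∑ l ∈ Icc 1 n, ∑ w ∈ catalanWords n, lPeaks l w := by
        rw [sum_comm]
        exact sum_congr rfl fun w hw => by rw [peaks, (mem_catalanWords.1 hw).1]
    _ = ∑ l ∈ Icc 1 n, if l + 2 ≤ n then (2 * (n - l) - 1).choose (n - l - 2) else 0 :=
        sum_congr rfl fun l _ => sum_lPeaks_catalanWords n l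
    _ = _ := by
        refine (sum_subset (Icc_subset_Icc_right (Nat.sub_le n 1)) fun l hl hl' => if_neg ?_).symm
        simp only [mem_Icc] at hl hl'
        omega

/-- The total number of peaks over all Catalan words of length `n` equals
`Σ_{l=1}^{n-1} C(2(n-l)-1, n-l-2)`, a summand being `0` whenever `n-l-2 < 0`. -/
theorem total_peaks (n : ℕ) (hn : 1 ≤ n) :
    ∑ᶠ w ∈ CatalanWord n, peaks w =
      ∑ l ∈ Finset.Icc 1 (n - 1),
        if l + 2 ≤ n then Nat.choose (2 * (n - l) - 1) (n - l - 2) else 0 :=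
  total_peaks_general n
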